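/- arXiv:2402.16816 — 3 statements merged into one kernel-verified Lean document; each statement's English description precedes it below -/
import Mathlib

section
/- Let the edges of the complete 4-partite graph K_2^4 with parts X_1, X_2, X_3, X_4 (each of size 2) be colored with 2 colors in such a way that every vertex has degree exactly 3 in each of the two colors. If there exists a vertex x and a color c such that some part X_i not containing x is entirely contained in the neighborhood of x in color c, then the coloring contains a monochromatic cycle C_4. -/
/-- The complete multipartite graph with `p` parts, each of size `n`:
vertices are pairs `(part, index)`, adjacent iff they lie in different parts. -/
def completeMultipartite (p n : ℕ) : SimpleGraph (Fin p × Fin n) where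
  Adj v w := v.1 ≠ w.1
  symm := ⟨fun _ _ h => h.symm⟩
  loopless := ⟨fun _ h => h rfl⟩

instance (p n : ℕ) : DecidableRel (completeMultipartite p n).Adj :=
  fun v w => inferInstanceAs (Decidable (v.1 ≠ w.1))

/-- The edge coloring `c` contains a monochromatic cycle `C₄` in the graph `G`. -/
def HasMonoC4 {V : Type*} (G : SimpleGraph V) {k : ℕ} (c : Sym2 V → Fin k) : Prop :=
  ∃ v₁ v₂ v₃ v₄ : V,
    v₁ ≠ v₂ ∧ v₁ ≠ v₃ ∧ v₁ ≠ v₄ ∧ v₂ ≠ v₃ ∧ v₂ ≠ v₄ ∧ v₃ ≠ v₄ ∧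
    G.Adj v₁ v₂ ∧ G.Adj v₂ v₃ ∧ G.Adj v₃ v₄ ∧ G.Adj v₄ v₁ ∧
    c s(v₁, v₂) = c s(v₂, v₃) ∧ c s(v₂, v₃) = c s(v₃, v₄) ∧ c s(v₃, v₄) = c s(v₄, v₁)

/-- The `p`-partite Ramsey number `r_p(C₄, k)`: the least positive `n` such that every
`k`-coloring of the edges of `K_n^p` contains a monochromatic `C₄`. -/
noncomputable def multipartiteRamsey (p k : ℕ) : ℕ :=
  sInf {n : ℕ | 0 < n ∧
    ∀ c : Sym2 (Fin p × Fin n) → Fin k, HasMonoC4 (completeMultipartite p n) c}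

/-- The degree of the vertex `x` in color `i` under the edge coloring `c` of `K_2^4`. -/
def colorDegree (c : Sym2 (Fin 4 × Fin 2) → Fin 2) (x : Fin 4 × Fin 2) (i : Fin 2) : ℕ :=
  (Finset.univ.filter fun y => (completeMultipartite 4 2).Adj x y ∧ c s(x, y) = i).card

/-! Without a monochromatic `C₄`, two vertices have at most one common neighbour in each colour.
The vertex `x` and the two vertices of the part `X_j` then have, in the other colour, three
neighbourhoods of size `3` that pairwise share at most one vertex, so they cover at least
`3 + 3 + 3 - 3 = 6` vertices; but all three avoid `x` and `X_j`, which leaves only `5`. -/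

open Finset

theorem Finset.card_add_card_add_card_le {α : Type*} [DecidableEq α] (A B C : Finset α) :
    #A + #B + #C ≤ #(A ∪ B ∪ C) + #(A ∩ B) + #(A ∩ C) + #(B ∩ C) := by
  have hAB := card_union_add_card_inter A B
  have hABC := card_union_add_card_inter (A ∪ B) C
  have hsplit : #((A ∪ B) ∩ C) ≤ #(A ∩ C) + #(B ∩ C) := by
    rw [union_inter_distrib_right]
    exact card_union_le _ _
  omega

section ColorNeighborhood

variable {V : Type*} [Fintype V] (G : SimpleGraph V) [DecidableRel G.Adj] {k : ℕ}
  (c : Sym2 V → Fin k)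

def colorNeighborFinset (v : V) (i : Fin k) : Finset V :=
  {w | G.Adj v w ∧ c s(v, w) = i}

variable {G c}

@[simp]
theorem mem_colorNeighborFinset {v w : V} {i : Fin k} :
    w ∈ colorNeighborFinset G c v i ↔ G.Adj v w ∧ c s(v, w) = i := by
  simp [colorNeighborFinset]

theorem card_colorNeighborFinset_inter_le_one [DecidableEq V] (hC4 : ¬HasMonoC4 G c)
    {u v : V} (huv : u ≠ v) (i : Fin k) :
    #(colorNeighborFinset G c u i ∩ colorNeighborFinset G c v i) ≤ 1 := by
  refine card_le_one.mpr fun a ha b hb => by_contra fun hab => hC4 ?_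
  simp only [mem_inter, mem_colorNeighborFinset] at ha hb
  obtain ⟨⟨hua, hca⟩, hva, hca'⟩ := ha
  obtain ⟨⟨hub, hcb⟩, hvb, hcb'⟩ := hb
  refine ⟨u, a, v, b, hua.ne, huv, hub.ne, hva.ne', hab, hvb.ne, hua, hva.symm, hvb, hub.symm,
    ?_, ?_, ?_⟩
  · rw [hca, Sym2.eq_swap, hca']
  · rw [Sym2.eq_swap, hca', hcb']
  · rw [hcb', Sym2.eq_swap, hcb]

end ColorNeighborhood

theorem card_filter_fst_ne_and_ne {j : Fin 4} {x : Fin 4 × Fin 2} (hx : x.1 ≠ j) :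
    #({a | a.1 ≠ j ∧ a ≠ x} : Finset (Fin 4 × Fin 2)) = 5 := by
  revert x j
  decide

theorem hasMonoC4_of_part_subset_colorNeighborhood_general (c : Sym2 (Fin 4 × Fin 2) → Fin 2)
    (hdeg : ∀ x : Fin 4 × Fin 2, ∀ i : Fin 2, colorDegree c x i = 3)
    (x : Fin 4 × Fin 2) (i : Fin 2) (j : Fin 4)
    (hsub : ∀ y : Fin 4 × Fin 2, y.1 = j →
      (completeMultipartite 4 2).Adj x y ∧ c s(x, y) = i) :
    HasMonoC4 (completeMultipartite 4 2) c := by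
  by_contra hC4
  obtain ⟨i', hi'⟩ := exists_ne i
  let N v := colorNeighborFinset (completeMultipartite 4 2) c v i'
  have hN v : #(N v) = 3 := hdeg v i'
  have hx : x.1 ≠ j := (hsub (j, 0) rfl).1
  let S : Finset (Fin 4 × Fin 2) := {a | a.1 ≠ j ∧ a ≠ x}
  have hNx : N x ⊆ S := fun a ha => by
    simp only [N, mem_colorNeighborFinset, S, mem_filter_univ] at ha ⊢
    exact ⟨fun haj => hi' (ha.2 ▸ (hsub a haj).2), ha.1.ne'⟩
  have hNj (b : Fin 2) : N (j, b) ⊆ S := fun a ha => by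
    simp only [N, mem_colorNeighborFinset, S, mem_filter_univ] at ha ⊢
    refine ⟨ha.1.symm, fun hax => hi' ?_⟩
    rw [← ha.2, hax, Sym2.eq_swap, (hsub (j, b) rfl).2]
  have hinter {u v} (huv : u ≠ v) : #(N u ∩ N v) ≤ 1 :=
    card_colorNeighborFinset_inter_le_one hC4 huv i'
  have : 3 + 3 + 3 ≤ 5 + 1 + 1 + 1 := calc
    3 + 3 + 3 = #(N x) + #(N (j, 0)) + #(N (j, 1)) := by rw [hN, hN, hN]
    _ ≤ #(N x ∪ N (j, 0) ∪ N (j, 1)) + #(N x ∩ N (j, 0)) + #(N x ∩ N (j, 1))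
          + #(N (j, 0) ∩ N (j, 1)) := card_add_card_add_card_le _ _ _
    _ ≤ 5 + 1 + 1 + 1 := by
      gcongr
      · exact (card_le_card (union_subset (union_subset hNx (hNj 0)) (hNj 1))).trans_eq
          (card_filter_fst_ne_and_ne hx)
      all_goals exact hinter (by simp [Prod.ext_iff, hx])
  omega

/-- Suppose the edges of `K_2^4` are 2-colored so that every vertex has degree exactly 3
in each color. If some part `X_j` not containing the vertex `x` is entirely contained in
the neighborhood of `x` in some color `i`, then there is a monochromatic `C₄`. -/
theorem hasMonoC4_of_part_subset_colorNeighborhood (c : Sym2 (Fin 4 × Fin 2) → Fin 2)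
    (hdeg : ∀ x : Fin 4 × Fin 2, ∀ i : Fin 2, colorDegree c x i = 3)
    (x : Fin 4 × Fin 2) (i : Fin 2) (j : Fin 4) (hj : x.1 ≠ j)
    (hsub : ∀ y : Fin 4 × Fin 2, y.1 = j →
      (completeMultipartite 4 2).Adj x y ∧ c s(x, y) = i) :
    HasMonoC4 (completeMultipartite 4 2) c :=
  hasMonoC4_of_part_subset_colorNeighborhood_general c hdeg x i j hsub
end

section
/- Every coloring of the edges of the complete tripartite graph K_11^3 (three parts, each of size 11) with 4 colors contains a monochromatic cycle C_4; equivalently, r_3(C_4,4) ≤ 11. -/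
/-!
Fix one part `P` of `K_11^3` and let `d_x(u)` be the number of neighbours in `P`, in color `x`,
of a vertex `u` outside `P`. Without a monochromatic `C₄`, two vertices of `P` have at most one
common neighbour of color `x` outside `P`, so `∑_u d_x(u) (d_x(u) - 1) ≤ 11 · 10` for each color
`x`. As `d (d - 1) ≥ 4 d - 6` for every integer `d`, this gives `4 ∑_u d_x(u) ≤ 110 + 22 · 6 = 242`,
hence `∑_u d_x(u) ≤ 60`. Summing over the four colors, `22 · 11 = 242 ≤ 240`, a contradiction.
-/

open Finset

theorem Nat.two_mul_mul_le_mul_sub_one_add (t d : ℕ) : 2 * t * d ≤ d * (d - 1) + t * (t + 1) := by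
  rcases d with _ | e
  · positivity
  · simp only [Nat.add_sub_cancel]
    nlinarith [sq_nonneg ((e : ℤ) - t)]

section RectangleFree

variable {α β γ : Type*} [Fintype β] [DecidableEq γ]

/-- A coloring `f u i` of the complete bipartite graph between `s` and `β` has no
monochromatic `K_{2,2}`. -/
def IsRectangleFree (s : Finset α) (f : α → β → γ) : Prop :=
  ∀ u ∈ s, ∀ v ∈ s, ∀ i j, u ≠ v → i ≠ j → ¬ (f u i = f u j ∧ f u j = f v i ∧ f v i = f v j)

def colorClass (f : α → β → γ) (u : α) (x : γ) : Finset β := {i | f u i = x}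

variable {s : Finset α} {f : α → β → γ}

theorem sum_card_colorClass [Fintype γ] (u : α) : ∑ x, #(colorClass f u x) = Fintype.card β :=
  (card_eq_sum_card_fiberwise fun _ _ => mem_univ _).symm

theorem IsRectangleFree.pairwiseDisjoint_offDiag (h : IsRectangleFree s f) (x : γ) :
    (s : Set α).PairwiseDisjoint fun u => (colorClass f u x).offDiag := by
  intro u hu v hv huv
  refine disjoint_left.mpr fun p hpu hpv => ?_
  simp only [mem_offDiag, colorClass, mem_filter, mem_univ, true_and] at hpu hpv
  exact h u hu v hv p.1 p.2 huv hpu.2.2 ⟨hpu.1.trans hpu.2.1.symm, hpu.2.1.trans hpv.1.symm,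
    hpv.1.trans hpv.2.1.symm⟩

theorem IsRectangleFree.sum_cherries_le (h : IsRectangleFree s f) (x : γ) :
    ∑ u ∈ s, #(colorClass f u x) * (#(colorClass f u x) - 1) ≤
      Fintype.card β * (Fintype.card β - 1) := by
  classical
  simp only [Nat.mul_sub_one, ← offDiag_card, ← card_univ]
  rw [← card_biUnion (h.pairwiseDisjoint_offDiag x)]
  exact card_le_card (biUnion_subset.mpr fun u _ => offDiag_mono (subset_univ _))

theorem IsRectangleFree.two_mul_sum_card_colorClass_le (h : IsRectangleFree s f) (x : γ) (t : ℕ) :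
    2 * t * ∑ u ∈ s, #(colorClass f u x) ≤
      Fintype.card β * (Fintype.card β - 1) + #s * (t * (t + 1)) :=
  calc 2 * t * ∑ u ∈ s, #(colorClass f u x)
      ≤ ∑ u ∈ s, (#(colorClass f u x) * (#(colorClass f u x) - 1) + t * (t + 1)) := by
        rw [mul_sum]
        exact sum_le_sum fun u _ => Nat.two_mul_mul_le_mul_sub_one_add t _
    _ ≤ Fintype.card β * (Fintype.card β - 1) + #s * (t * (t + 1)) := by
        rw [sum_add_distrib, sum_const, smul_eq_mul]
        exact Nat.add_le_add_right (h.sum_cherries_le x) _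

/-- The rounding down in `/ (2 * t)`, color by color, is what beats the averaged bound. -/
theorem IsRectangleFree.card_mul_le [Fintype γ] (h : IsRectangleFree s f) {t : ℕ} (ht : 0 < t) :
    #s * Fintype.card β ≤
      Fintype.card γ * ((Fintype.card β * (Fintype.card β - 1) + #s * (t * (t + 1))) / (2 * t)) :=
  calc #s * Fintype.card β = ∑ x, ∑ u ∈ s, #(colorClass f u x) := by
        rw [sum_comm, ← smul_eq_mul, ← sum_const]
        exact sum_congr rfl fun u _ => (sum_card_colorClass u).symm
    _ ≤ ∑ _x : γ, (Fintype.card β * (Fintype.card β - 1) + #s * (t * (t + 1))) / (2 * t) :=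
        sum_le_sum fun x _ => (Nat.le_div_iff_mul_le (by positivity)).mpr <| by
          rw [mul_comm]; exact h.two_mul_sum_card_colorClass_le x t
    _ = _ := by rw [sum_const, card_univ, smul_eq_mul]

end RectangleFree

/-- A monochromatic rectangle `{u, v} × {(P, i), (P, j)}` is the cycle `(P, i) u (P, j) v`. -/
theorem isRectangleFree_of_not_hasMonoC4 {p n k : ℕ} {c : Sym2 (Fin p × Fin n) → Fin k}
    (hc : ¬ HasMonoC4 (completeMultipartite p n) c) (P : Fin p) :
    IsRectangleFree {u | u.1 ≠ P} fun u i => c s(u, (P, i)) := by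
  intro u hu v hv i j huv hij ⟨hij_u, hu_vi, hv_ij⟩
  simp only [mem_filter, mem_univ, true_and] at hu hv
  refine hc ⟨(P, i), u, (P, j), v, fun e => hu (congrArg Prod.fst e).symm,
    fun e => hij (congrArg Prod.snd e), fun e => hv (congrArg Prod.fst e).symm,
    fun e => hu (congrArg Prod.fst e), huv, fun e => hv (congrArg Prod.fst e).symm,
    Ne.symm hu, hu, Ne.symm hv, hv, ?_, ?_, ?_⟩
  · rw [Sym2.eq_swap]; exact hij_u
  · rw [Sym2.eq_swap (a := (P, j))]; exact hu_vi.trans hv_ij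
  · rw [Sym2.eq_swap]; exact hv_ij.symm

/-- Every 4-coloring of the edges of `K_11^3` contains a monochromatic `C₄`;
equivalently, `r₃(C₄, 4) ≤ 11`. -/
theorem tripartiteRamsey_four_colors_le :
    (∀ c : Sym2 (Fin 3 × Fin 11) → Fin 4, HasMonoC4 (completeMultipartite 3 11) c) ∧
      multipartiteRamsey 3 4 ≤ 11 := by
  have hall : ∀ c : Sym2 (Fin 3 × Fin 11) → Fin 4,
      HasMonoC4 (completeMultipartite 3 11) c := by
    intro c
    by_contra hc
    have hs : #({u | u.1 ≠ 0} : Finset (Fin 3 × Fin 11)) = 22 := by decide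
    have hbound := (isRectangleFree_of_not_hasMonoC4 hc 0).card_mul_le two_pos
    norm_num [hs] at hbound
  exact ⟨hall, Nat.sInf_le ⟨by norm_num, hall⟩⟩
end

section
/- Every coloring of the edges of the complete 4-partite graph K_9^4 (four parts, each of size 9) with 4 colors contains a monochromatic cycle C_4; equivalently, r_4(C_4,4) ≤ 9. -/
/-!
Let `dᵢ(z)` be the number of edges of colour `i` at `z`. If no colour class contains a `C₄`, two
distinct vertices have at most one common neighbour in each colour, so counting monochromatic
paths of length two gives `∑_z dᵢ(z) (dᵢ(z) - 1) ≤ |V| (|V| - 1)` for every colour `i`.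
Cauchy–Schwarz gives `k ∑ᵢ dᵢ(z)² ≥ deg(z)²`, so such a `D`-regular graph satisfies
`D² ≤ k² (|V| - 1) + k D`. For `K_9^4` this reads `27² = 729 ≤ 4² · 35 + 4 · 27 = 668`, which fails.
-/

open Finset

namespace SimpleGraph

variable {V : Type*} [Fintype V] {G : SimpleGraph V} [DecidableRel G.Adj] {k : ℕ}

def colorNeighborFinset (G : SimpleGraph V) [DecidableRel G.Adj] (c : Sym2 V → Fin k)
    (i : Fin k) (z : V) : Finset V :=
  {w ∈ G.neighborFinset z | c s(z, w) = i}

theorem sum_card_colorNeighborFinset (c : Sym2 V → Fin k) (z : V) :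
    ∑ i, #(G.colorNeighborFinset c i z) = G.degree z :=
  (card_eq_sum_card_fiberwise fun _ _ => mem_univ _).symm

variable {c : Sym2 V → Fin k}

theorem mem_colorNeighborFinset {i : Fin k} {z w : V} :
    w ∈ G.colorNeighborFinset c i z ↔ G.Adj z w ∧ c s(z, w) = i := by
  simp [colorNeighborFinset]

theorem hasMonoC4_of_two_common_colorNeighbors {i : Fin k} {x y z₁ z₂ : V} (hxy : x ≠ y)
    (hz : z₁ ≠ z₂) (hx₁ : x ∈ G.colorNeighborFinset c i z₁) (hy₁ : y ∈ G.colorNeighborFinset c i z₁)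
    (hx₂ : x ∈ G.colorNeighborFinset c i z₂) (hy₂ : y ∈ G.colorNeighborFinset c i z₂) :
    HasMonoC4 G c := by
  rw [mem_colorNeighborFinset] at hx₁ hy₁ hx₂ hy₂
  refine ⟨x, z₁, y, z₂, hx₁.1.ne.symm, hxy, hx₂.1.ne.symm, hy₁.1.ne, hz, hy₂.1.ne.symm,
    hx₁.1.symm, hy₁.1, hy₂.1.symm, hx₂.1, ?_, ?_, ?_⟩
  · rw [Sym2.eq_swap, hx₁.2, hy₁.2]
  · rw [hy₁.2, Sym2.eq_swap, hy₂.2]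
  · rw [Sym2.eq_swap, hy₂.2, hx₂.2]

theorem card_common_colorNeighbors_le_one [DecidableEq V] (h : ¬HasMonoC4 G c) (i : Fin k)
    {x y : V} (hxy : x ≠ y) :
    #{z | x ∈ G.colorNeighborFinset c i z ∧ y ∈ G.colorNeighborFinset c i z} ≤ 1 :=
  card_le_one.mpr fun _ h₁ _ h₂ => by_contra fun hz =>
    h <| hasMonoC4_of_two_common_colorNeighbors hxy hz (mem_filter.1 h₁).2.1 (mem_filter.1 h₁).2.2
      (mem_filter.1 h₂).2.1 (mem_filter.1 h₂).2.2

theorem sum_card_offDiag_colorNeighborFinset_le [DecidableEq V] (h : ¬HasMonoC4 G c)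
    (i : Fin k) : ∑ z, #(G.colorNeighborFinset c i z).offDiag ≤ #(univ : Finset V).offDiag := by
  have hdouble := sum_card_bipartiteAbove_eq_sum_card_bipartiteBelow (s := univ)
    (t := (univ : Finset V).offDiag) (r := fun z p => p ∈ (G.colorNeighborFinset c i z).offDiag)
  have habove (z : V) : (univ : Finset V).offDiag.bipartiteAbove
      (fun z p => p ∈ (G.colorNeighborFinset c i z).offDiag) z =
      (G.colorNeighborFinset c i z).offDiag :=
    filter_mem_eq_inter.trans (inter_eq_right.2 (offDiag_mono (subset_univ _)))
  simp only [habove] at hdouble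
  rw [hdouble, card_eq_sum_ones]
  refine sum_le_sum fun p hp => ?_
  have hbelow : (univ : Finset V).bipartiteBelow
      (fun z p => p ∈ (G.colorNeighborFinset c i z).offDiag) p =
      ({z | p.1 ∈ G.colorNeighborFinset c i z ∧ p.2 ∈ G.colorNeighborFinset c i z} : Finset V) := by
    ext z
    simp [bipartiteBelow, mem_offDiag, (mem_offDiag.1 hp).2.2]
  rw [hbelow]
  exact card_common_colorNeighbors_le_one h i (mem_offDiag.1 hp).2.2

theorem sum_degree_sq_le_of_not_hasMonoC4 [DecidableEq V] (h : ¬HasMonoC4 G c) :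
    ∑ z, G.degree z ^ 2 ≤ k * (k * #(univ : Finset V).offDiag + ∑ z, G.degree z) := by
  set d := fun i z => #(G.colorNeighborFinset c i z)
  have hsq (i : Fin k) (z : V) : d i z ^ 2 = #(G.colorNeighborFinset c i z).offDiag + d i z := by
    rw [offDiag_card, sq, Nat.sub_add_cancel (Nat.le_mul_self _)]
  calc ∑ z, G.degree z ^ 2 = ∑ z, (∑ i, d i z) ^ 2 := by simp only [d, sum_card_colorNeighborFinset]
    _ ≤ ∑ z, k * ∑ i, d i z ^ 2 := sum_le_sum fun z _ => by
      simpa using sq_sum_le_card_mul_sum_sq (s := univ) (f := fun i => d i z)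
    _ = k * ∑ i, (∑ z, #(G.colorNeighborFinset c i z).offDiag + ∑ z, d i z) := by
      rw [← mul_sum, sum_comm]
      simp only [hsq, sum_add_distrib]
    _ ≤ k * ∑ i : Fin k, (#(univ : Finset V).offDiag + ∑ z, d i z) := by
      gcongr with i
      exact sum_card_offDiag_colorNeighborFinset_le h i
    _ = k * (k * #(univ : Finset V).offDiag + ∑ z, G.degree z) := by
      rw [sum_add_distrib, sum_comm]
      simp [d, sum_card_colorNeighborFinset]

theorem hasMonoC4_of_isRegularOfDegree [Nonempty V] {D : ℕ} (hG : G.IsRegularOfDegree D)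
    (hD : k ^ 2 * (Fintype.card V - 1) + k * D < D ^ 2) (c : Sym2 V → Fin k) : HasMonoC4 G c := by
  classical
  by_contra h
  have hbound := sum_degree_sq_le_of_not_hasMonoC4 h
  simp only [hG.degree_eq, sum_const, card_univ, smul_eq_mul, offDiag_card, ← Nat.mul_sub_one]
    at hbound
  have hN : Fintype.card V * D ^ 2 ≤ Fintype.card V * (k ^ 2 * (Fintype.card V - 1) + k * D) :=
    hbound.trans_eq (by ring)
  exact hD.not_ge (Nat.le_of_mul_le_mul_left hN Fintype.card_pos)

end SimpleGraph

theorem completeMultipartite_isRegularOfDegree (p n : ℕ) :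
    (completeMultipartite p n).IsRegularOfDegree ((p - 1) * n) := fun v => by
  have hnbr : (completeMultipartite p n).neighborFinset v = {v.1}ᶜ ×ˢ univ := by
    ext w
    rw [SimpleGraph.mem_neighborFinset]
    simp [completeMultipartite, eq_comm]
  rw [← SimpleGraph.card_neighborFinset_eq_degree, hnbr, card_product, card_compl,
    card_singleton, card_univ, Fintype.card_fin, Fintype.card_fin]

/-- Every 4-coloring of the edges of `K_9^4` contains a monochromatic `C₄`;
equivalently, `r₄(C₄, 4) ≤ 9`. -/
theorem fourpartiteRamsey_four_colors_le :
    (∀ c : Sym2 (Fin 4 × Fin 9) → Fin 4, HasMonoC4 (completeMultipartite 4 9) c) ∧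
      multipartiteRamsey 4 4 ≤ 9 := by
  have hmono (c : Sym2 (Fin 4 × Fin 9) → Fin 4) : HasMonoC4 (completeMultipartite 4 9) c :=
    SimpleGraph.hasMonoC4_of_isRegularOfDegree (completeMultipartite_isRegularOfDegree 4 9)
      (by simp) c
  exact ⟨hmono, Nat.sInf_le ⟨by norm_num, hmono⟩⟩
end
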